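/- arXiv:1608.06053 — 2 statements merged into one kernel-verified Lean document; each statement's English description precedes it below -/
import Mathlib

section
/- Let k be a field, let D be a nonnegative integer, and let ℓ = (D+1)(D+2)/2. Assign positive integer weights w_1 to x and w_2 to y, and for a nonzero f ∈ k[x,y] let w(f) denote the weighted multiplicity of f, i.e. the minimum of a·w_1 + b·w_2 over all monomials x^a y^b occurring in f with nonzero coefficient. If f_1,...,f_ℓ form a k-basis of the space of polynomials in k[x,y] of total degree at most D, then w(f_1·f_2···f_ℓ) ≤ (w_1 + w_2)·D(D+1)(D+2)/6. -/
open MvPolynomial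

/-- The weighted multiplicity of a polynomial `f ∈ k[x,y]` for positive weights `w₁, w₂`:
the minimum of `a·w₁ + b·w₂` over all monomials `x^a y^b` occurring in `f`. -/
noncomputable def wMult {k : Type*} [CommSemiring k] (w₁ w₂ : ℕ)
    (f : MvPolynomial (Fin 2) k) : ℕ :=
  sInf ((fun d : Fin 2 →₀ ℕ => d 0 * w₁ + d 1 * w₂) '' (f.support : Set (Fin 2 →₀ ℕ)))

open Finset


private lemma three_mul_sum : ∀ n : ℕ, 3 * ∑ s ∈ Finset.range (n+1), s*(s+1) = n*(n+1)*(n+2) := by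
  intro n
  induction n with
  | zero => simp
  | succ n ih => rw [Finset.sum_range_succ, Nat.mul_add, ih]; ring

private lemma six_dvd (n : ℕ) : 6 ∣ n*(n+1)*(n+2) := by
  induction n with
  | zero => simp
  | succ n ih =>
    have h2 : 2 ∣ (n+1)*(n+2) := by
      rcases Nat.even_or_odd n with ⟨m, hm⟩ | ⟨m, hm⟩
      · exact ⟨(n+1)*(m+1), by subst hm; ring⟩
      · exact ⟨(m+1)*(n+2), by subst hm; ring⟩
    have key : (n+1)*(n+1+1)*(n+1+2) = n*(n+1)*(n+2) + 3*((n+1)*(n+2)) := by ring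
    rw [key]
    obtain ⟨a, ha⟩ := ih
    obtain ⟨b, hb⟩ := h2
    exact ⟨a + b, by rw [ha, hb]; ring⟩

private lemma antidiag_sum (s w₁ w₂ : ℕ) :
    2 * ∑ p ∈ Finset.HasAntidiagonal.antidiagonal s, (p.1 * w₁ + p.2 * w₂) = s*(s+1)*(w₁+w₂) := by
  rw [Finset.Nat.sum_antidiagonal_eq_sum_range_succ_mk]
  have h1 : ∑ i ∈ range (s+1), (i * w₁ + (s - i) * w₂)
      = (∑ i ∈ range (s+1), i) * w₁ + (∑ i ∈ range (s+1), (s - i)) * w₂ := by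
    rw [Finset.sum_add_distrib, Finset.sum_mul, Finset.sum_mul]
  have h2 : ∑ i ∈ range (s+1), (s - i) = ∑ i ∈ range (s+1), i := by
    have := Finset.sum_range_reflect (fun i => i) (s+1)
    simpa using this
  have h3 : (∑ i ∈ range (s+1), i) * 2 = (s+1) * s := Finset.sum_range_id_mul_two (s+1)
  rw [h1, h2]
  nlinarith [h3]

private def Sset (D : ℕ) : Finset (ℕ × ℕ) :=
  (Finset.range (D+1)).biUnion (fun s => Finset.HasAntidiagonal.antidiagonal s)

private lemma mem_Sset {D : ℕ} {p : ℕ × ℕ} : p ∈ Sset D ↔ p.1 + p.2 ≤ D := by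
  simp only [Sset, Finset.mem_biUnion, Finset.mem_range, Finset.HasAntidiagonal.mem_antidiagonal]
  constructor
  · rintro ⟨s, hs, h⟩; omega
  · intro h; exact ⟨p.1 + p.2, by omega, rfl⟩

private lemma sum_Sset (D w₁ w₂ : ℕ) :
    ∑ p ∈ Sset D, (p.1 * w₁ + p.2 * w₂) = (w₁ + w₂) * (D*(D+1)*(D+2)/6) := by
  have hdisj : (↑(Finset.range (D+1)) : Set ℕ).PairwiseDisjoint
      (fun s => Finset.HasAntidiagonal.antidiagonal s) := by
    intro a _ b _ hab
    simp only [Function.onFun, Finset.disjoint_left]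
    intro p hp hq
    rw [Finset.HasAntidiagonal.mem_antidiagonal] at hp hq
    omega
  have h6 : 6 * ∑ p ∈ Sset D, (p.1 * w₁ + p.2 * w₂) = D*(D+1)*(D+2)*(w₁+w₂) := by
    rw [Sset, Finset.sum_biUnion hdisj, Finset.mul_sum]
    calc ∑ s ∈ range (D+1), 6 * ∑ p ∈ Finset.HasAntidiagonal.antidiagonal s, (p.1 * w₁ + p.2 * w₂)
        = ∑ s ∈ range (D+1), 3 * (s*(s+1)*(w₁+w₂)) := by
          refine Finset.sum_congr rfl fun s _ => ?_
          rw [← antidiag_sum s w₁ w₂]; ring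
      _ = (3 * ∑ s ∈ range (D+1), s*(s+1)) * (w₁+w₂) := by
          rw [Finset.mul_sum, Finset.sum_mul]
          exact Finset.sum_congr rfl fun s _ => by ring
      _ = D*(D+1)*(D+2)*(w₁+w₂) := by rw [three_mul_sum]
  obtain ⟨m, hm⟩ := six_dvd D
  rw [hm] at h6 ⊢
  rw [Nat.mul_div_cancel_left m (by norm_num)]
  have : 6 * ∑ p ∈ Sset D, (p.1 * w₁ + p.2 * w₂) = 6 * ((w₁ + w₂) * m) := by rw [h6]; ring
  omega

section PhiSec
variable {k : Type*} [CommSemiring k]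

private noncomputable def Phi (w₁ w₂ : ℕ) :
    MvPolynomial (Fin 2) k →+* PowerSeries (MvPolynomial (Fin 2) k) :=
  eval₂Hom ((PowerSeries.C (R := MvPolynomial (Fin 2) k)).comp MvPolynomial.C)
    (fun i => PowerSeries.C (X i) * PowerSeries.X ^ (if i = 0 then w₁ else w₂))

private lemma Phi_monomial (w₁ w₂ : ℕ) (d : Fin 2 →₀ ℕ) (c : k) :
    Phi w₁ w₂ (monomial d c)
      = PowerSeries.C (monomial d c) * PowerSeries.X ^ (d 0 * w₁ + d 1 * w₂) := by
  rw [Phi, eval₂Hom_monomial]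
  rw [Finsupp.prod_fintype _ _ (fun i => pow_zero _), Fin.prod_univ_two]
  rw [monomial_eq, Finsupp.prod_fintype _ _ (fun i => pow_zero _), Fin.prod_univ_two]
  simp only [if_pos rfl, if_neg (by norm_num : (1 : Fin 2) ≠ 0), RingHom.coe_comp,
    Function.comp_apply, map_mul, map_pow, mul_pow, if_true]
  ring

private lemma coeff_Phi (w₁ w₂ n : ℕ) (f : MvPolynomial (Fin 2) k) :
    PowerSeries.coeff n (Phi w₁ w₂ f)
      = ∑ d ∈ f.support.filter (fun d => d 0 * w₁ + d 1 * w₂ = n),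
          monomial d (MvPolynomial.coeff d f) := by
  classical
  conv_lhs => rw [← support_sum_monomial_coeff f, map_sum, map_sum]
  rw [Finset.sum_filter]
  refine Finset.sum_congr rfl fun d _ => ?_
  rw [Phi_monomial, PowerSeries.coeff_C_mul, PowerSeries.coeff_X_pow]
  by_cases h : d 0 * w₁ + d 1 * w₂ = n
  · simp [h]
  · rw [if_neg (fun h' => h h'.symm), if_neg h, mul_zero]

private lemma wMult_le_of_mem {w₁ w₂ : ℕ} {f : MvPolynomial (Fin 2) k}
    {d : Fin 2 →₀ ℕ} (hd : d ∈ f.support) :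
    wMult w₁ w₂ f ≤ d 0 * w₁ + d 1 * w₂ :=
  Nat.sInf_le ⟨d, hd, rfl⟩

private lemma order_Phi {w₁ w₂ : ℕ} {f : MvPolynomial (Fin 2) k} (hf : f ≠ 0) :
    (Phi w₁ w₂ f).order = (wMult w₁ w₂ f : ℕ∞) := by
  classical
  rw [PowerSeries.order_eq_nat]
  constructor
  · have hne : ((fun d : Fin 2 →₀ ℕ => d 0 * w₁ + d 1 * w₂) ''
        (f.support : Set (Fin 2 →₀ ℕ))).Nonempty :=
      (Set.Nonempty.image _ (support_nonempty.2 hf))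
    obtain ⟨d₀, hd₀, hwt⟩ := Nat.sInf_mem hne
    rw [coeff_Phi]
    intro h0
    have := congrArg (MvPolynomial.coeff d₀) h0
    rw [MvPolynomial.coeff_sum] at this
    simp only [MvPolynomial.coeff_monomial, MvPolynomial.coeff_zero] at this
    rw [Finset.sum_ite_eq' _ d₀ (fun d => MvPolynomial.coeff d f)] at this
    rw [if_pos (Finset.mem_filter.2 ⟨hd₀, hwt⟩)] at this
    exact (MvPolynomial.mem_support_iff.1 hd₀) this
  · intro i hi
    rw [coeff_Phi]
    refine Finset.sum_eq_zero fun d hd => ?_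
    rw [Finset.mem_filter] at hd
    exact absurd hd.2 (by have := wMult_le_of_mem (w₁ := w₁) (w₂ := w₂) hd.1; omega)

end PhiSec


private lemma order_prod_ps {R : Type*} [CommRing R] [IsDomain R] {ι : Type*}
    (s : Finset ι) (φ : ι → PowerSeries R) :
    (∏ i ∈ s, φ i).order = ∑ i ∈ s, (φ i).order := by
  classical
  induction s using Finset.induction with
  | empty => simp [PowerSeries.order_one]
  | insert a s h ih => rw [Finset.prod_insert h, Finset.sum_insert h, PowerSeries.order_mul, ih]

private lemma hall_cond {k : Type*} [Field k] {ℓ : ℕ} (f : Fin ℓ → MvPolynomial (Fin 2) k)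
    (hli : LinearIndependent k f) (s : Finset (Fin ℓ)) :
    s.card ≤ (s.biUnion fun i => (f i).support).card := by
  classical
  set U := s.biUnion fun i => (f i).support with hU
  set W : Finset (MvPolynomial (Fin 2) k) := U.image fun d => monomial d (1 : k) with hW
  have hmemspan : ∀ i ∈ s, f i ∈ Submodule.span k (W : Set (MvPolynomial (Fin 2) k)) := by
    intro i hi
    rw [← support_sum_monomial_coeff (f i)]
    refine Submodule.sum_mem _ fun d hd => ?_
    have h1 : (monomial d) (MvPolynomial.coeff d (f i))
        = (MvPolynomial.coeff d (f i)) • monomial d (1 : k) := by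
      rw [← (monomial d).map_smul, smul_eq_mul, mul_one]
    rw [h1]
    exact Submodule.smul_mem _ _ (Submodule.subset_span
      (Finset.mem_coe.2 (Finset.mem_image.2 ⟨d, Finset.mem_biUnion.2 ⟨i, hi, hd⟩, rfl⟩)))
  have hli' : LinearIndependent k (fun i : s => f i) := hli.comp _ Subtype.val_injective
  have hrange : Set.range (fun i : s => f i)
      ≤ Submodule.span k (W : Set (MvPolynomial (Fin 2) k)) := by
    rintro - ⟨i, rfl⟩; exact hmemspan i i.2
  have hcard := linearIndependent_le_span' (fun i : s => f i) hli'
    (W : Set (MvPolynomial (Fin 2) k)) hrange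
  have : s.card ≤ W.card := by
    simpa only [Cardinal.mk_coe_finset, Finset.coe_sort_coe, Fintype.card_coe,
      Nat.cast_le] using hcard
  exact this.trans (Finset.card_image_le)

/-- If `f₁, …, f_ℓ` (with `ℓ = (D+1)(D+2)/2`) form a `k`-basis of the space of polynomials in
`k[x,y]` of total degree at most `D`, then the weighted multiplicity of their product is at
most `(w₁ + w₂)·D(D+1)(D+2)/6`. -/
theorem wMult_prod_basis_le {k : Type*} [Field k] (D ℓ : ℕ)
    (hℓ : ℓ = (D + 1) * (D + 2) / 2)
    (w₁ w₂ : ℕ) (hw₁ : 0 < w₁) (hw₂ : 0 < w₂)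
    (f : Fin ℓ → MvPolynomial (Fin 2) k)
    (hli : LinearIndependent k f)
    (hspan : Submodule.span k (Set.range f) = restrictTotalDegree (Fin 2) k D) :
    wMult w₁ w₂ (∏ i, f i) ≤ (w₁ + w₂) * (D * (D + 1) * (D + 2) / 6) := by
  classical
  have hne : ∀ i, f i ≠ 0 := fun i => hli.ne_zero i
  have hP : (∏ i, f i) ≠ 0 := Finset.prod_ne_zero_iff.2 fun i _ => hne i
  have hprod : wMult w₁ w₂ (∏ i, f i) = ∑ i, wMult w₁ w₂ (f i) := by
    have h1 : ((wMult w₁ w₂ (∏ i, f i) : ℕ) : ℕ∞)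
        = (((∑ i, wMult w₁ w₂ (f i) : ℕ) : ℕ∞)) := by
      rw [← order_Phi (w₁ := w₁) (w₂ := w₂) hP, map_prod, order_prod_ps, Nat.cast_sum]
      exact Finset.sum_congr rfl fun i _ => order_Phi (hne i)
    exact_mod_cast h1
  have hsupp : ∀ i, ∀ d ∈ (f i).support, d 0 + d 1 ≤ D := by
    intro i d hd
    have hfi : f i ∈ restrictTotalDegree (Fin 2) k D := by
      rw [← hspan]; exact Submodule.subset_span ⟨i, rfl⟩
    rw [mem_restrictTotalDegree] at hfi
    have h1 := le_totalDegree hd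
    have hsum : (d.sum fun _ e => e) = d 0 + d 1 := by
      rw [Finsupp.sum_fintype _ _ (fun _ => rfl), Fin.sum_univ_two]
    omega
  obtain ⟨g, ginj, hg⟩ := (Finset.all_card_le_biUnion_card_iff_exists_injective
      (fun i => (f i).support)).1 (hall_cond f hli)
  have h1 : ∑ i, wMult w₁ w₂ (f i) ≤ ∑ i, ((g i) 0 * w₁ + (g i) 1 * w₂) :=
    Finset.sum_le_sum fun i _ => wMult_le_of_mem (hg i)
  set h : Fin ℓ → ℕ × ℕ := fun i => ((g i) 0, (g i) 1) with hh
  have hinj : Function.Injective h := by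
    intro a b hab
    apply ginj
    ext j
    fin_cases j
    · exact congrArg Prod.fst hab
    · exact congrArg Prod.snd hab
  have h2 : ∑ i, ((g i) 0 * w₁ + (g i) 1 * w₂)
      = ∑ p ∈ Finset.univ.image h, (p.1 * w₁ + p.2 * w₂) := by
    rw [Finset.sum_image (fun a _ b _ hab => hinj hab)]
  have h3 : Finset.univ.image h ⊆ Sset D := by
    intro p hp
    rw [Finset.mem_image] at hp
    obtain ⟨i, -, rfl⟩ := hp
    exact mem_Sset.2 (hsupp i (g i) (hg i))
  calc wMult w₁ w₂ (∏ i, f i) = ∑ i, wMult w₁ w₂ (f i) := hprod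
    _ ≤ ∑ p ∈ Finset.univ.image h, (p.1 * w₁ + p.2 * w₂) := h1.trans (le_of_eq h2)
    _ ≤ ∑ p ∈ Sset D, (p.1 * w₁ + p.2 * w₂) := Finset.sum_le_sum_of_subset h3
    _ = (w₁ + w₂) * (D * (D + 1) * (D + 2) / 6) := sum_Sset D w₁ w₂
end

section
/- For every positive integer m, the sum of a over all triples (a,b,c) of nonnegative integers with a + b + c = 3m, b ≤ 2m, and c ≤ 2m equals m(25m² + 27m + 8)/6. Equivalently, (2/(7m²(m+1) + 2m)) · Σ a = (25m² + 27m + 8)/(21m(m+1) + 6). -/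
open Finset

/-- The (finite) set of triples `(a,b,c)` of nonnegative integers with `a + b + c = 3m`,
`b ≤ 2m` and `c ≤ 2m`, indexing the monomial basis `B₂` for the del Pezzo surface of
degree `7`. -/
def triplesDeg7 (m : ℕ) : Finset (ℕ × ℕ × ℕ) :=
  (Finset.range (3 * m + 1) ×ˢ Finset.range (3 * m + 1) ×ˢ Finset.range (3 * m + 1)).filter
    (fun p => p.1 + p.2.1 + p.2.2 = 3 * m ∧ p.2.1 ≤ 2 * m ∧ p.2.2 ≤ 2 * m)

/-- Closed form for `∑_{a<n+1} a(n+1-a)`. -/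
lemma sumH_deg7 (n : ℕ) : 6 * ∑ a ∈ range (n+1), a * (n+1-a) = n*(n+1)*(n+2) := by
  induction n with
  | zero => simp
  | succ k ih =>
    have step : ∑ a ∈ range (k+2), a * (k+2-a)
        = (∑ a ∈ range (k+1), a * (k+1-a)) + (∑ a ∈ range (k+1), a) + (k+1) := by
      rw [Finset.sum_range_succ]
      have h1 : ∀ a ∈ range (k+1), a * (k+2-a) = a * (k+1-a) + a := by
        intro a ha
        have : a ≤ k := Nat.lt_succ_iff.mp (mem_range.mp ha)
        have h2 : k+2-a = (k+1-a)+1 := by omega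
        rw [h2, Nat.mul_add, mul_one]
      rw [Finset.sum_congr rfl h1, Finset.sum_add_distrib]
      have h3 : k+2-(k+1) = 1 := by omega
      rw [h3, mul_one]
    have gauss : 2 * ∑ a ∈ range (k+1), a = k * (k+1) := by
      have h := Finset.sum_range_id_mul_two (k+1)
      simp only [Nat.add_sub_cancel] at h
      linarith [h]
    rw [step]
    nlinarith [ih, gauss]

lemma inner_c_deg7 (m a b : ℕ) :
    (∑ c ∈ range (3*m+1), if a + b + c = 3*m ∧ b ≤ 2*m ∧ c ≤ 2*m then a else 0)
      = if m ≤ a+b ∧ a+b ≤ 3*m ∧ b ≤ 2*m then a else 0 := by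
  by_cases h : m ≤ a+b ∧ a+b ≤ 3*m ∧ b ≤ 2*m
  · rw [if_pos h]
    rw [Finset.sum_eq_single_of_mem (3*m - (a+b))]
    · rw [if_pos (by omega)]
    · simp only [mem_range]; omega
    · intro c hc hne
      rw [if_neg (by omega)]
  · rw [if_neg h]
    apply Finset.sum_eq_zero
    intro c hc
    rw [if_neg (by omega)]

lemma middle_b_deg7 (m a : ℕ) (ha : a ≤ 3*m) :
    (∑ b ∈ range (3*m+1), if m ≤ a+b ∧ a+b ≤ 3*m ∧ b ≤ 2*m then a else 0)
      = a * ((3*m+1-a) - 2*(m-a)) := by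
  rw [← Finset.sum_filter, Finset.sum_const, smul_eq_mul]
  have hset : (range (3*m+1)).filter (fun b => m ≤ a+b ∧ a+b ≤ 3*m ∧ b ≤ 2*m)
      = Finset.Icc (m-a) (min (2*m) (3*m-a)) := by
    ext b
    simp only [mem_filter, mem_range, Finset.mem_Icc, le_min_iff]
    omega
  rw [hset, Nat.card_Icc, mul_comm]
  congr 1
  omega

lemma main_red_deg7 (m : ℕ) :
    (∑ p ∈ triplesDeg7 m, p.1)
      = ∑ a ∈ range (3*m+1), a * ((3*m+1-a) - 2*(m-a)) := by
  rw [triplesDeg7, Finset.sum_filter, Finset.sum_product]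
  refine Finset.sum_congr rfl fun a ha => ?_
  rw [Finset.sum_product]
  have : ∀ b ∈ range (3*m+1),
      (∑ c ∈ range (3*m+1), if a + b + c = 3*m ∧ b ≤ 2*m ∧ c ≤ 2*m then a else 0)
        = if m ≤ a+b ∧ a+b ≤ 3*m ∧ b ≤ 2*m then a else 0 := fun b _ => inner_c_deg7 m a b
  rw [Finset.sum_congr rfl this,
    middle_b_deg7 m a (Nat.lt_succ_iff.mp (mem_range.mp ha))]

lemma six_mul_sum_deg7 (m : ℕ) (hm : 0 < m) :
    6 * (∑ p ∈ triplesDeg7 m, p.1) = m * (25 * m ^ 2 + 27 * m + 8) := by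
  obtain ⟨k, rfl⟩ : ∃ k, m = k + 1 := ⟨m - 1, by omega⟩
  set m := k + 1 with hmdef
  rw [main_red_deg7]
  have split : (∑ a ∈ range (3*m+1), a * ((3*m+1-a) - 2*(m-a)))
      + 2 * (∑ a ∈ range (3*m+1), a * (m-a))
      = ∑ a ∈ range (3*m+1), a * (3*m+1-a) := by
    rw [Finset.mul_sum, ← Finset.sum_add_distrib]
    refine Finset.sum_congr rfl fun a ha => ?_
    have ha' : a ≤ 3*m := Nat.lt_succ_iff.mp (mem_range.mp ha)
    have key : (3*m+1-a) - 2*(m-a) + 2*(m-a) = 3*m+1-a := by omega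
    calc a * ((3*m+1-a) - 2*(m-a)) + 2 * (a * (m-a))
        = a * (((3*m+1-a) - 2*(m-a)) + 2*(m-a)) := by ring
      _ = a * (3*m+1-a) := by rw [key]
  have trunc : (∑ a ∈ range (3*m+1), a * (m-a)) = ∑ a ∈ range m, a * (m-a) := by
    symm
    apply Finset.sum_subset (Finset.range_subset_range.mpr (by omega))
    intro a _ ha
    have : m ≤ a := by simpa [Finset.mem_range, not_lt] using ha
    have : m - a = 0 := by omega
    simp [this]
  have hA : 6 * (∑ a ∈ range m, a * (m-a)) = k*(k+1)*(k+2) := sumH_deg7 k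
  have hB : 6 * (∑ a ∈ range (3*m+1), a * (3*m+1-a)) = (3*m)*(3*m+1)*(3*m+2) := by
    have := sumH_deg7 (3*m)
    simpa using this
  have hid : (3*m)*(3*m+1)*(3*m+2)
      = m * (25 * m ^ 2 + 27 * m + 8) + 2 * (k*(k+1)*(k+2)) := by
    rw [hmdef]; ring
  rw [trunc] at split
  nlinarith [split, hA, hB, hid]

/-- The sum of `a` over all triples `(a,b,c)` of nonnegative integers with `a + b + c = 3m`,
`b ≤ 2m` and `c ≤ 2m` equals `m(25m² + 27m + 8)/6`; equivalently, multiplying by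
`2/(7m²(m+1) + 2m)`, it equals `(25m² + 27m + 8)/(21m(m+1) + 6)`. -/
theorem sum_triples_degree7 (m : ℕ) (hm : 0 < m) :
    (∑ p ∈ triplesDeg7 m, p.1) = m * (25 * m ^ 2 + 27 * m + 8) / 6 ∧
    (2 / (7 * (m : ℚ) ^ 2 * (m + 1) + 2 * m)) * ((∑ p ∈ triplesDeg7 m, p.1 : ℕ) : ℚ)
      = (25 * m ^ 2 + 27 * m + 8) / (21 * m * (m + 1) + 6) := by
  have h6 := six_mul_sum_deg7 m hm
  constructor
  · set S := ∑ p ∈ triplesDeg7 m, p.1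
    set T := m * (25 * m ^ 2 + 27 * m + 8) with hT
    omega
  · have hc : (6 : ℚ) * ((∑ p ∈ triplesDeg7 m, p.1 : ℕ) : ℚ)
        = (m : ℚ) * (25 * (m:ℚ) ^ 2 + 27 * m + 8) := by
      exact_mod_cast h6
    have hm1 : (1 : ℚ) ≤ (m : ℚ) := by exact_mod_cast hm
    have d1 : 7 * (m : ℚ) ^ 2 * (m + 1) + 2 * m ≠ 0 := by nlinarith
    have d2 : 21 * (m : ℚ) * (m + 1) + 6 ≠ 0 := by nlinarith
    field_simp
    push_cast at hc ⊢
    linear_combination (7*(m:ℚ)^2 + 7*(m:ℚ) + 2) * hc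
end
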